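/- Let A₋ₘ, …, Aₙ be a sequence of 2p×2q complex matrices and for -m ≤ k ≤ n let T_k denote the block Toeplitz matrix (A_{k+i-j}) with block rows indexed by the entries A_k,…,A_n down the first column and A_k,…,A_{-m} along the first row (i.e. T_k has block (i,j) equal to A_{k+i-j}, 0 ≤ i ≤ n-k, 0 ≤ j ≤ k+m). Then for each k, dim ker T_{k-1} + dim ker T_{k+1} ≥ 2·dim ker T_k, i.e. the sequence Δ_k = dim ker T_k − dim ker T_{k-1} is nondecreasing in k (where ker denotes the right kernel, with the convention that the kernel space for k = -m-1 is zero). -/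

import Mathlib

/-!
Appending a zero block to a kernel vector of `T_k`, or prepending one, gives two injective copies
`U`, `V` of `ker T_k` inside `ker T_{k+1}`. A vector lying in both copies vanishes in its first and
last block, and the block in between lies in `ker T_{k-1}`. Hence
`2 dim ker T_k = dim U + dim V = dim (U ⊔ V) + dim (U ⊓ V) ≤ dim ker T_{k+1} + dim ker T_{k-1}`.
-/

open Module Matrix

theorem Submodule.two_mul_finrank_le_of_injective {K E F : Type*} [DivisionRing K]
    [AddCommGroup E] [Module K E] [AddCommGroup F] [Module K F] [FiniteDimensional K F]
    {f g : E →ₗ[K] F} (hf : Function.Injective f) (hg : Function.Injective g)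
    {S : Submodule K E} {W X : Submodule K F} (hfW : S.map f ≤ W) (hgW : S.map g ≤ W)
    (hX : S.map f ⊓ S.map g ≤ X) :
    2 * finrank K S ≤ finrank K W + finrank K X := by
  have hfS := (S.equivMapOfInjective f hf).finrank_eq
  have hgS := (S.equivMapOfInjective g hg).finrank_eq
  have hsum := Submodule.finrank_sup_add_finrank_inf_eq (S.map f) (S.map g)
  have hsup := Submodule.finrank_mono (sup_le hfW hgW)
  have hinf := Submodule.finrank_mono hX
  omega

namespace BlockToeplitz

section Padding

variable {K κ : Type*} [Semiring K]

variable (K κ) in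
def appendZero (C : ℕ) : (Fin C × κ → K) →ₗ[K] (Fin (C + 1) × κ → K) where
  toFun x jb := Fin.lastCases (motive := fun _ => K) 0 (fun j => x (j, jb.2)) jb.1
  map_add' x y := by
    funext ⟨j, b⟩
    cases j using Fin.lastCases <;> simp
  map_smul' c x := by
    funext ⟨j, b⟩
    cases j using Fin.lastCases <;> simp

variable (K κ) in
def prependZero (C : ℕ) : (Fin C × κ → K) →ₗ[K] (Fin (C + 1) × κ → K) where
  toFun x jb := Fin.cases (motive := fun _ => K) 0 (fun j => x (j, jb.2)) jb.1
  map_add' x y := by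
    funext ⟨j, b⟩
    cases j using Fin.cases <;> simp
  map_smul' c x := by
    funext ⟨j, b⟩
    cases j using Fin.cases <;> simp

section

variable {C : ℕ} (x : Fin C × κ → K) (b : κ)

@[simp] theorem appendZero_castSucc (j : Fin C) :
    appendZero K κ C x (j.castSucc, b) = x (j, b) := by
  simp [appendZero]

@[simp] theorem appendZero_last : appendZero K κ C x (Fin.last C, b) = 0 := by
  simp [appendZero]

@[simp] theorem prependZero_succ (j : Fin C) :
    prependZero K κ C x (j.succ, b) = x (j, b) := by
  simp [prependZero]

@[simp] theorem prependZero_zero : prependZero K κ C x (0, b) = 0 := by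
  simp [prependZero]

end

theorem appendZero_injective (C : ℕ) : Function.Injective (appendZero K κ C) :=
  fun x y h => funext fun ⟨j, b⟩ => by simpa using congrFun h (j.castSucc, b)

theorem prependZero_injective (C : ℕ) : Function.Injective (prependZero K κ C) :=
  fun x y h => funext fun ⟨j, b⟩ => by simpa using congrFun h (j.succ, b)

theorem exists_prependZero_eq_of_appendZero_eq {C : ℕ} {x x' : Fin (C + 1) × κ → K}
    (h : appendZero K κ (C + 1) x = prependZero K κ (C + 1) x') :
    ∃ z, prependZero K κ C z = x ∧ appendZero K κ C z = x' := by
  refine ⟨fun jb => x' (jb.1.castSucc, jb.2), funext fun ⟨j, b⟩ => ?_, funext fun ⟨j, b⟩ => ?_⟩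
  · cases j using Fin.cases with
    | zero =>
      have h0 := congrFun h ((0 : Fin (C + 1)).castSucc, b)
      rw [appendZero_castSucc, Fin.castSucc_zero, prependZero_zero] at h0
      simp [h0]
    | succ j =>
      have hj := congrFun h (j.succ.castSucc, b)
      rw [appendZero_castSucc, ← Fin.succ_castSucc, prependZero_succ] at hj
      simp [hj]
  · cases j using Fin.lastCases with
    | last =>
      have hl := congrFun h ((Fin.last C).succ, b)
      rw [prependZero_succ, Fin.succ_last, appendZero_last] at hl
      simp [hl]
    | cast j => simp

end Padding

section Toeplitz

variable {K ι κ : Type*} [CommSemiring K] [Fintype κ]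

/-- Block row `r` and block column `c` hold `A (t + r - c)`; the paper's `T_k` is
`blockToeplitz A (n - k + 1) (k + m + 1) k`. -/
def blockToeplitz (A : ℤ → Matrix ι κ K) (R C : ℕ) (t : ℤ) :
    Matrix (Fin R × ι) (Fin C × κ) K :=
  Matrix.of fun r c => A (t + r.1 - c.1) r.2 c.2

def toeplitzKer (A : ℤ → Matrix ι κ K) (R C : ℕ) (t : ℤ) : Submodule K (Fin C × κ → K) :=
  LinearMap.ker (blockToeplitz A R C t).mulVecLin

def blockConv (A : ℤ → Matrix ι κ K) {C : ℕ} (x : Fin C × κ → K) (i : ℤ) : ι → K :=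
  ∑ j : Fin C, A (i - j) *ᵥ fun b => x (j, b)

theorem mem_toeplitzKer_iff {A : ℤ → Matrix ι κ K} {R C : ℕ} {t : ℤ} {x : Fin C × κ → K} :
    x ∈ toeplitzKer A R C t ↔ ∀ i : ℤ, t ≤ i → i < t + R → blockConv A x i = 0 := by
  have hrow : ∀ r : Fin R, blockConv A x (t + r) = 0 ↔
      ∀ a, (blockToeplitz A R C t *ᵥ x) (r, a) = 0 := by
    intro r
    simp [funext_iff, blockConv, blockToeplitz, mulVec, dotProduct,
      Fintype.sum_prod_type, Finset.sum_apply]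
  simp only [toeplitzKer, LinearMap.mem_ker, mulVecLin_apply, funext_iff, Prod.forall,
    Pi.zero_apply, ← hrow]
  constructor
  · intro h i hti hiR
    simpa [Int.toNat_of_nonneg (sub_nonneg.2 hti)] using h ⟨(i - t).toNat, by omega⟩
  · intro h r
    exact h _ (by omega) (by omega)

theorem toeplitzKer_mono (A : ℤ → Matrix ι κ K) {R R' C : ℕ} {t t' : ℤ} (ht : t ≤ t')
    (hR : t' + R' ≤ t + R) : toeplitzKer A R C t ≤ toeplitzKer A R' C t' := by
  intro x hx
  exact mem_toeplitzKer_iff.2 fun i hi hi' => mem_toeplitzKer_iff.1 hx i (by omega) (by omega)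

theorem toeplitzKer_inf_succ_le (A : ℤ → Matrix ι κ K) (R C : ℕ) (t : ℤ) :
    toeplitzKer A (R + 1) C t ⊓ toeplitzKer A (R + 1) C (t + 1) ≤
      toeplitzKer A (R + 2) C t := by
  rintro x ⟨hx, hx'⟩
  refine mem_toeplitzKer_iff.2 fun i hi hi' => ?_
  by_cases h : i < t + (R + 1 : ℕ)
  · exact mem_toeplitzKer_iff.1 hx i hi h
  · exact mem_toeplitzKer_iff.1 hx' i (by omega) (by omega)

theorem blockConv_appendZero (A : ℤ → Matrix ι κ K) {C : ℕ} (x : Fin C × κ → K) (i : ℤ) :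
    blockConv A (appendZero K κ C x) i = blockConv A x i := by
  simp [blockConv, Fin.sum_univ_castSucc, ← Pi.zero_def]

theorem blockConv_prependZero (A : ℤ → Matrix ι κ K) {C : ℕ} (x : Fin C × κ → K) (i : ℤ) :
    blockConv A (prependZero K κ C x) i = blockConv A x (i - 1) := by
  simp [blockConv, Fin.sum_univ_succ, ← Pi.zero_def, sub_add_eq_sub_sub_swap]

theorem appendZero_mem_toeplitzKer_iff {A : ℤ → Matrix ι κ K} {R C : ℕ} {t : ℤ}
    {x : Fin C × κ → K} :
    appendZero K κ C x ∈ toeplitzKer A R (C + 1) t ↔ x ∈ toeplitzKer A R C t := by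
  simp only [mem_toeplitzKer_iff, blockConv_appendZero]

theorem prependZero_mem_toeplitzKer_iff {A : ℤ → Matrix ι κ K} {R C : ℕ} {t : ℤ}
    {x : Fin C × κ → K} :
    prependZero K κ C x ∈ toeplitzKer A R (C + 1) (t + 1) ↔ x ∈ toeplitzKer A R C t := by
  simp only [mem_toeplitzKer_iff, blockConv_prependZero]
  constructor
  · intro h i hi hi'
    simpa using h (i + 1) (by omega) (by omega)
  · intro h i hi hi'
    exact h (i - 1) (by omega) (by omega)

end Toeplitz

theorem two_mul_finrank_toeplitzKer_le {K ι κ : Type*} [Field K] [Fintype κ]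
    (A : ℤ → Matrix ι κ K) (R C : ℕ) (t : ℤ) :
    2 * finrank K (toeplitzKer A (R + 1) (C + 1) t) ≤
      finrank K (toeplitzKer A (R + 2) C (t - 1)) +
        finrank K (toeplitzKer A R (C + 2) (t + 1)) := by
  let T := toeplitzKer A (R + 1) (C + 1) t
  have hU : T.map (appendZero K κ (C + 1)) ≤ toeplitzKer A R (C + 2) (t + 1) := by
    rintro _ ⟨x, hx, rfl⟩
    exact toeplitzKer_mono A (by omega) (by omega) (appendZero_mem_toeplitzKer_iff.2 hx)
  have hV : T.map (prependZero K κ (C + 1)) ≤ toeplitzKer A R (C + 2) (t + 1) := by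
    rintro _ ⟨x, hx, rfl⟩
    exact toeplitzKer_mono A le_rfl (by omega) (prependZero_mem_toeplitzKer_iff.2 hx)
  have hUV : T.map (appendZero K κ (C + 1)) ⊓ T.map (prependZero K κ (C + 1)) ≤
      (toeplitzKer A (R + 2) C (t - 1)).map (appendZero K κ (C + 1) ∘ₗ prependZero K κ C) := by
    rintro _ ⟨⟨x, hx, rfl⟩, ⟨x', hx', hxx'⟩⟩
    obtain ⟨z, rfl, rfl⟩ := exists_prependZero_eq_of_appendZero_eq hxx'.symm
    refine ⟨z, toeplitzKer_inf_succ_le A R C (t - 1) ⟨?_, ?_⟩, rfl⟩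
    · exact prependZero_mem_toeplitzKer_iff.1 (by rwa [sub_add_cancel])
    · rw [sub_add_cancel]
      exact appendZero_mem_toeplitzKer_iff.1 hx'
  calc 2 * finrank K T
      ≤ finrank K (toeplitzKer A R (C + 2) (t + 1)) + finrank K (Submodule.map
          (appendZero K κ (C + 1) ∘ₗ prependZero K κ C) (toeplitzKer A (R + 2) C (t - 1))) :=
        Submodule.two_mul_finrank_le_of_injective (appendZero_injective _)
          (prependZero_injective _) hU hV hUV
    _ ≤ _ := by
      rw [add_comm]
      exact Nat.add_le_add_right (Submodule.finrank_map_le _ _) _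

end BlockToeplitz

theorem stmt_15 (p q : ℕ) (m n : ℤ)
    (A : ℤ → Matrix (Fin (2 * p)) (Fin (2 * q)) ℂ)
    (Tker : ℤ → ℕ)
    (hTker : ∀ j : ℤ, Tker j =
      Module.finrank ℂ (LinearMap.ker (Matrix.mulVecLin (Matrix.of
        fun (r : Fin ((n - j).toNat + 1) × Fin (2 * p))
            (c : Fin ((j + m).toNat + 1) × Fin (2 * q)) =>
          A (j + (r.1 : ℤ) - (c.1 : ℤ)) r.2 c.2)))) :
    (∀ k : ℤ, -m ≤ k - 1 → k + 1 ≤ n →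
        2 * Tker k ≤ Tker (k - 1) + Tker (k + 1)) ∧
      (-m + 1 ≤ n → 2 * Tker (-m) ≤ 0 + Tker (-m + 1)) := by
  have hT : ∀ j, Tker j =
      finrank ℂ (BlockToeplitz.toeplitzKer A ((n - j).toNat + 1) ((j + m).toNat + 1) j) := hTker
  constructor
  · intro k hk hk'
    rw [hT, hT, hT, show (n - (k - 1)).toNat + 1 = (n - k).toNat + 2 by omega,
      show (k - 1 + m).toNat + 1 = (k + m).toNat by omega,
      show (n - (k + 1)).toNat + 1 = (n - k).toNat by omega,
      show (k + 1 + m).toNat + 1 = (k + m).toNat + 2 by omega]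
    exact BlockToeplitz.two_mul_finrank_toeplitzKer_le A _ _ k
  · intro h
    rw [hT, hT, show (-m + m).toNat + 1 = 0 + 1 by simp,
      show (n - (-m + 1)).toNat + 1 = (n - -m).toNat by omega,
      show (-m + 1 + m).toNat + 1 = 0 + 2 by omega]
    have hzero : finrank ℂ (BlockToeplitz.toeplitzKer A ((n - -m).toNat + 2) 0 (-m - 1)) = 0 :=
      finrank_zero_of_subsingleton
    simpa only [hzero] using BlockToeplitz.two_mul_finrank_toeplitzKer_le A (n - -m).toNat 0 (-m)
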